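/- Let X₁ and X₂ be independent random variables with distributions F₁ and F₂, and suppose the convolution F₁ * F₂ is long-tailed. Then for every c > 0, F₁(x - c, x + c] = o(\overline{F₁*F₂}(x)) as x → ∞. -/

import Mathlib

open MeasureTheory Filter Set Asymptotics

/-- Tail function of a distribution: `F̄(x) = μ(x, ∞)`. -/
noncomputable def tail (μ : Measure ℝ) (x : ℝ) : ℝ := (μ (Set.Ioi x)).toReal

/-- `F(a, b] = F(b) - F(a)`. -/
noncomputable def intv (μ : Measure ℝ) (a b : ℝ) : ℝ := (μ (Set.Ioc a b)).toReal

/-- A distribution is long-tailed if `F̄(x+1)/F̄(x) → 1` as `x → ∞`. -/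
def LongTailed (μ : Measure ℝ) : Prop :=
  Tendsto (fun x => tail μ (x + 1) / tail μ x) atTop (nhds 1)

/-- Convolution of two distributions on ℝ (law of the sum of independent rvs). -/
noncomputable def mconv (μ ν : Measure ℝ) : Measure ℝ :=
  Measure.map (fun p : ℝ × ℝ => p.1 + p.2) (μ.prod ν)

/-- `n`-fold convolution of a distribution with itself; `nconv μ 0` is the unit mass at 0. -/
noncomputable def nconv (μ : Measure ℝ) : ℕ → Measure ℝ
  | 0 => Measure.dirac 0
  | n + 1 => mconv (nconv μ n) μ

/-! Long-tailedness of `F₁ * F₂` makes the mass it puts on any window `(x - t, x + t]` negligible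
against `\overline{F₁ * F₂}(x)`. Choosing `n` with `q = F₂(-n, n] > 0`, independence gives
`F₁(x - c, x + c] · q ≤ (F₁ * F₂)(x - c - n, x + c + n]`, so `F₁(x - c, x + c]` is negligible too. -/

section Tail

variable (μ : Measure ℝ)

lemma tail_nonneg (x : ℝ) : 0 ≤ tail μ x := ENNReal.toReal_nonneg

lemma intv_nonneg (a b : ℝ) : 0 ≤ intv μ a b := ENNReal.toReal_nonneg

variable [IsFiniteMeasure μ]

lemma tail_antitone : Antitone (tail μ) := fun _ _ h =>
  ENNReal.toReal_mono (measure_ne_top μ _) (measure_mono (Ioi_subset_Ioi h))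

lemma intv_mono {a b a' b' : ℝ} (ha : a' ≤ a) (hb : b ≤ b') : intv μ a b ≤ intv μ a' b' :=
  ENNReal.toReal_mono (measure_ne_top μ _) (measure_mono (Ioc_subset_Ioc ha hb))

lemma intv_eq_tail_sub_tail {a b : ℝ} (h : a ≤ b) : intv μ a b = tail μ a - tail μ b := by
  have hsplit : μ (Ioi a) = μ (Ioc a b) + μ (Ioi b) := by
    rw [← Ioc_union_Ioi_eq_Ioi h, measure_union (Ioc_disjoint_Ioi le_rfl) measurableSet_Ioi]
  rw [intv, tail, tail, hsplit, ENNReal.toReal_add (measure_ne_top μ _) (measure_ne_top μ _)]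
  ring

lemma exists_intv_neg_nat_pos [NeZero μ] : ∃ n : ℕ, 0 < intv μ (-n) n := by
  have hunion : (⋃ n : ℕ, Ioc (-(n : ℝ)) n) = univ := by
    refine eq_univ_of_forall fun x => mem_iUnion.2 ?_
    obtain ⟨n, hn⟩ := exists_nat_gt |x|
    exact ⟨n, by linarith [neg_abs_le x], by linarith [le_abs_self x]⟩
  obtain ⟨n, hn⟩ : ∃ n : ℕ, μ (Ioc (-(n : ℝ)) n) ≠ 0 := by
    by_contra! h
    exact NeZero.ne μ (Measure.measure_univ_eq_zero.1 (hunion ▸ measure_iUnion_null h))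
  exact ⟨n, ENNReal.toReal_pos hn (measure_ne_top μ _)⟩

end Tail

instance (μ ν : Measure ℝ) [IsFiniteMeasure μ] [IsFiniteMeasure ν] :
    IsFiniteMeasure (mconv μ ν) := by
  unfold mconv
  infer_instance

lemma intv_mul_intv_le_intv_mconv (μ ν : Measure ℝ) [IsFiniteMeasure μ] [IsFiniteMeasure ν]
    (a b d₁ d₂ : ℝ) : intv μ a b * intv ν d₁ d₂ ≤ intv (mconv μ ν) (a + d₁) (b + d₂) := by
  have hsub : Ioc a b ×ˢ Ioc d₁ d₂ ⊆ (fun p : ℝ × ℝ => p.1 + p.2) ⁻¹' Ioc (a + d₁) (b + d₂) := by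
    rintro ⟨x, y⟩ ⟨⟨hx₁, hx₂⟩, hy₁, hy₂⟩
    exact ⟨add_lt_add hx₁ hy₁, add_le_add hx₂ hy₂⟩
  rw [intv, intv, intv, ← ENNReal.toReal_mul, ← Measure.prod_prod]
  refine ENNReal.toReal_mono (measure_ne_top _ _) ?_
  rw [mconv, Measure.map_apply measurable_add measurableSet_Ioc]
  exact measure_mono hsub

namespace LongTailed

variable {G : Measure ℝ} [IsFiniteMeasure G]

lemma isLittleO_tail_sub_tail_add_one (hG : LongTailed G) :
    (fun x => tail G x - tail G (x + 1)) =o[atTop] tail G := by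
  have hzero : ∀ x, tail G x = 0 → tail G x - tail G (x + 1) = 0 := fun x hx => by
    linarith [tail_antitone G (le_add_of_nonneg_right zero_le_one : x ≤ x + 1),
      tail_nonneg G (x + 1)]
  rw [isLittleO_iff_tendsto hzero]
  -- `y / 0 = 0`, so a ratio tending to `1` forces `tail G x ≠ 0` eventually
  have hne : ∀ᶠ x in atTop, tail G x ≠ 0 := (hG.eventually_ne one_ne_zero).mono fun x hx h0 =>
    hx (by rw [h0, div_zero])
  have hlim : Tendsto (fun x => 1 - tail G (x + 1) / tail G x) atTop (nhds 0) := by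
    simpa using (tendsto_const_nhds (x := (1 : ℝ))).sub hG
  refine hlim.congr' (hne.mono fun x hx => ?_)
  show _ = (tail G x - tail G (x + 1)) / tail G x
  rw [sub_div, div_self hx]

lemma isLittleO_tail_sub_tail_add_nat (hG : LongTailed G) (m : ℕ) :
    (fun x => tail G x - tail G (x + m)) =o[atTop] tail G := by
  induction m with
  | zero => simp
  | succ m ih =>
    have hstep : (fun x => tail G (x + m) - tail G (x + m + 1)) =o[atTop] tail G :=
      (hG.isLittleO_tail_sub_tail_add_one.comp_tendsto (tendsto_atTop_add_const_right _ _
        tendsto_id)).trans_isBigO (isBigO_of_le _ fun x => by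
          simp only [Function.comp, id, Real.norm_of_nonneg (tail_nonneg G _)]
          exact tail_antitone G (le_add_of_nonneg_right m.cast_nonneg))
    refine (ih.add hstep).congr_left fun x => ?_
    push_cast
    ring_nf

lemma tail_sub_nat_isBigO (hG : LongTailed G) (m : ℕ) :
    (fun x => tail G (x - m)) =O[atTop] tail G := by
  -- `tail G x` differs from `tail G (x - m)` by `o(tail G (x - m))`
  have h : (fun x => tail G (x - m) - tail G (x - m + m)) =o[atTop] fun x => tail G (x - m) :=
    (hG.isLittleO_tail_sub_tail_add_nat m).comp_tendsto (tendsto_atTop_add_const_right _ _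
      tendsto_id)
  refine h.neg_left.right_isTheta_add.isBigO.congr_right fun x => ?_
  simp

lemma intv_isLittleO (hG : LongTailed G) (t : ℝ) :
    (fun x => intv G (x - t) (x + t)) =o[atTop] tail G := by
  set m := ⌈t⌉₊
  have ht : t ≤ m := Nat.le_ceil t
  have hwindow : (fun x => intv G (x - m) (x - m + (2 * m : ℕ))) =o[atTop] tail G := by
    refine (((hG.isLittleO_tail_sub_tail_add_nat (2 * m)).comp_tendsto
      (tendsto_atTop_add_const_right _ _ tendsto_id)).trans_isBigO
      (hG.tail_sub_nat_isBigO m)).congr_left fun x => ?_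
    exact (intv_eq_tail_sub_tail G (le_add_of_nonneg_right (Nat.cast_nonneg _))).symm
  refine (isBigO_of_le _ fun x => ?_).trans_isLittleO hwindow
  rw [Real.norm_of_nonneg (intv_nonneg G _ _), Real.norm_of_nonneg (intv_nonneg G _ _)]
  exact intv_mono G (by linarith) (by push_cast; linarith)

end LongTailed

/-- If the convolution of F1 and F2 is long-tailed then, for every c > 0,
F1(x - c, x + c] = o(tail (F1 * F2) x). -/
theorem stmt2 (F₁ F₂ : Measure ℝ) [IsProbabilityMeasure F₁] [IsProbabilityMeasure F₂]
    (hL : LongTailed (mconv F₁ F₂)) :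
    ∀ c > 0, (fun x => intv F₁ (x - c) (x + c)) =o[atTop] tail (mconv F₁ F₂) := by
  intro c _
  obtain ⟨n, hq⟩ := exists_intv_neg_nat_pos F₂
  have hbound : ∀ x, intv F₁ (x - c) (x + c) * intv F₂ (-n) n ≤
      intv (mconv F₁ F₂) (x - (c + n)) (x + (c + n)) := fun x => by
    rw [show x - (c + n) = x - c + -n by ring, show x + (c + n) = x + c + n by ring]
    exact intv_mul_intv_le_intv_mconv F₁ F₂ (x - c) (x + c) (-n) n
  refine (isBigO_of_le' (c := (intv F₂ (-n) n)⁻¹) _ fun x => ?_).trans_isLittleO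
    (hL.intv_isLittleO (c + n))
  rw [Real.norm_of_nonneg (intv_nonneg F₁ _ _), Real.norm_of_nonneg (intv_nonneg _ _ _),
    le_inv_mul_iff₀ hq, mul_comm]
  exact hbound x
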